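/- Let n be a positive natural number, let Φ₁, …, Φ_N be bare measurement channels on n×n complex matrices, and let Φ = Φ_N ∘ ⋯ ∘ Φ₁ (regarded as a complex-linear endomorphism of the space of n×n complex matrices). Then there is no invertible complex-linear map 𝒰 on n×n complex matrices such that 𝒰 ∘ Φ = (−Φ) ∘ 𝒰. (In other words, bare measurement feedback processes are incompatible with P symmetry.) -/

import Mathlib

open Matrix
open scoped ComplexOrder

/-- The positive semidefinite square root of a positive semidefinite matrix
(the definition of `Matrix.PosSemidef.sqrt` in the older Mathlib, since removed). -/
noncomputable def Matrix.PosSemidef.sqrt {n 𝕜 : Type*} [Fintype n] [DecidableEq n] [RCLike 𝕜]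
    {A : Matrix n n 𝕜} (hA : A.PosSemidef) : Matrix n n 𝕜 :=
  hA.1.eigenvectorUnitary.1 * diagonal ((↑) ∘ Real.sqrt ∘ hA.1.eigenvalues) *
  (star hA.1.eigenvectorUnitary : Matrix n n 𝕜)

/-- A bare measurement channel: `Φ(ρ) = Σ_α √E_α ρ √E_α` for some POVM `(E_α)`. -/
def IsBareChannel {n : ℕ}
    (Φ : Matrix (Fin n) (Fin n) ℂ → Matrix (Fin n) (Fin n) ℂ) : Prop :=
  ∃ (k : ℕ) (E : Fin k → Matrix (Fin n) (Fin n) ℂ)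
    (hE : ∀ α, (E α).PosSemidef),
      (∑ α, E α) = 1 ∧ ∀ ρ, Φ ρ = ∑ α, (hE α).sqrt * ρ * (hE α).sqrt

/-!
For the Hilbert–Schmidt inner product, a bare channel `ρ ↦ ∑ B ρ B` (with `B = √E`) is an
operator `T` with `0 ≤ T ≤ 1` in the Loewner order and `T 1 = 1`. Such an operator satisfies
`‖x - T x‖² + ‖T x‖² ≤ ‖x‖²`, so it is a contraction fixing every vector whose norm it preserves,
and compositions inherit this. If `𝒰 Φ = -Φ 𝒰`, then `v = 𝒰 1` satisfies `Φ v = -v`; hence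
`‖Φ v‖ = ‖v‖`, so `Φ v = v` and `v = 0`, contradicting the injectivity of `𝒰`.
-/

open scoped InnerProductSpace

structure IsFixingContraction {E : Type*} [NormedAddCommGroup E] (f : E → E) : Prop where
  norm_map_le : ∀ x, ‖f x‖ ≤ ‖x‖
  map_eq_self_of_norm_map_eq : ∀ x, ‖f x‖ = ‖x‖ → f x = x

namespace IsFixingContraction

variable {E : Type*} [NormedAddCommGroup E] {f g : E → E}

lemma id : IsFixingContraction (id : E → E) := ⟨fun _ ↦ le_rfl, fun _ _ ↦ rfl⟩

lemma comp (hg : IsFixingContraction g) (hf : IsFixingContraction f) :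
    IsFixingContraction (g ∘ f) where
  norm_map_le x := (hg.norm_map_le (f x)).trans (hf.norm_map_le x)
  map_eq_self_of_norm_map_eq x h := by
    have hfx : ‖f x‖ = ‖x‖ := le_antisymm (hf.norm_map_le x) (h ▸ hg.norm_map_le (f x))
    rw [Function.comp_apply, hg.map_eq_self_of_norm_map_eq (f x) (h.trans hfx.symm),
      hf.map_eq_self_of_norm_map_eq x hfx]

lemma eq_zero_of_map_eq_neg [IsAddTorsionFree E] (hf : IsFixingContraction f) {x : E}
    (hx : f x = -x) : x = 0 :=
  self_eq_neg.mp <| (hf.map_eq_self_of_norm_map_eq x (by rw [hx, norm_neg])).symm.trans hx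

end IsFixingContraction

namespace LinearMap

variable {𝕜 E : Type*} [RCLike 𝕜] [NormedAddCommGroup E] [InnerProductSpace 𝕜 E]

lemma IsSymmetric.isPositive_mul_self {S : E →ₗ[𝕜] E} (hS : S.IsSymmetric) :
    (S * S).IsPositive :=
  ⟨hS.mul_of_commute hS (Commute.refl S), fun x ↦ by
    rw [Module.End.mul_apply, hS, inner_self_eq_norm_sq]; positivity⟩

variable {T : E →ₗ[𝕜] E}

open RCLike in
lemma norm_map_sq_le_re_inner (h₀ : 0 ≤ T) (h₁ : T ≤ 1) (x : E) :
    ‖T x‖ ^ 2 ≤ re ⟪x, T x⟫_𝕜 := by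
  rw [nonneg_iff_isPositive] at h₀
  rw [le_def] at h₁
  -- `T - T² = T (1 - T) T + (1 - T) T (1 - T)`, a sum of two positive operators.
  have h₁T := h₁.re_inner_nonneg_right (T x)
  have h₀T := h₀.re_inner_nonneg_right (x - T x)
  simp only [sub_apply, Module.End.one_apply, map_sub, inner_sub_left, inner_sub_right]
    at h₁T h₀T
  rw [← h₀.isSymmetric x (T x)] at h₀T
  rw [← inner_self_eq_norm_sq (𝕜 := 𝕜)]
  linarith

lemma norm_sub_map_sq_add_norm_map_sq_le (h₀ : 0 ≤ T) (h₁ : T ≤ 1) (x : E) :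
    ‖x - T x‖ ^ 2 + ‖T x‖ ^ 2 ≤ ‖x‖ ^ 2 := by
  rw [norm_sub_sq (𝕜 := 𝕜)]
  linarith [norm_map_sq_le_re_inner h₀ h₁ x]

lemma isFixingContraction (h₀ : 0 ≤ T) (h₁ : T ≤ 1) : IsFixingContraction T where
  norm_map_le x := by
    have hx := norm_sub_map_sq_add_norm_map_sq_le h₀ h₁ x
    exact (sq_le_sq₀ (norm_nonneg _) (norm_nonneg _)).mp (by linarith [sq_nonneg ‖x - T x‖])
  map_eq_self_of_norm_map_eq x h := by
    have hx := norm_sub_map_sq_add_norm_map_sq_le h₀ h₁ x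
    rw [h, add_le_iff_nonpos_left, sq_nonpos_iff, norm_eq_zero, sub_eq_zero] at hx
    exact hx.symm

end LinearMap

namespace Matrix

variable {ι 𝕜 : Type*} [Fintype ι] [DecidableEq ι] [RCLike 𝕜]

open scoped MatrixOrder in
lemma PosSemidef.sqrt_eq_cfcSqrt {A : Matrix ι ι 𝕜} (hA : A.PosSemidef) :
    hA.sqrt = CFC.sqrt A := by
  rw [CFC.sqrt_eq_real_sqrt A hA.nonneg, cfcₙ_eq_cfc, hA.1.cfc_eq, IsHermitian.cfc,
    Unitary.conjStarAlgAut_apply]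
  rfl

noncomputable abbrev hilbertSchmidtNormedAddCommGroup : NormedAddCommGroup (Matrix ι ι 𝕜) :=
  toMatrixNormedAddCommGroup 1 PosDef.one

attribute [local instance] hilbertSchmidtNormedAddCommGroup

noncomputable abbrev hilbertSchmidtInnerProductSpace : InnerProductSpace 𝕜 (Matrix ι ι 𝕜) :=
  toMatrixInnerProductSpace 1 PosSemidef.one

end Matrix

attribute [local instance] hilbertSchmidtNormedAddCommGroup hilbertSchmidtInnerProductSpace

namespace Matrix

variable {ι 𝕜 α : Type*} [Fintype ι] [DecidableEq ι] [RCLike 𝕜] [Fintype α]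

lemma hilbertSchmidt_inner (x y : Matrix ι ι 𝕜) : ⟪x, y⟫_𝕜 = (y * xᴴ).trace := by
  change (y * 1 * xᴴ).trace = _
  rw [Matrix.mul_one]

lemma IsHermitian.isSymmetric_mulLeft {A : Matrix ι ι 𝕜} (hA : A.IsHermitian) :
    (LinearMap.mulLeft 𝕜 A).IsSymmetric := fun x y ↦ by
  simp only [LinearMap.mulLeft_apply, hilbertSchmidt_inner, conjTranspose_mul, hA.eq]
  rw [← Matrix.mul_assoc, trace_mul_comm, Matrix.mul_assoc]

lemma IsHermitian.isSymmetric_mulRight {A : Matrix ι ι 𝕜} (hA : A.IsHermitian) :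
    (LinearMap.mulRight 𝕜 A).IsSymmetric := fun x y ↦ by
  simp only [LinearMap.mulRight_apply, hilbertSchmidt_inner, conjTranspose_mul, hA.eq,
    Matrix.mul_assoc]

noncomputable def krausMap (B : α → Matrix ι ι 𝕜) : Matrix ι ι 𝕜 →ₗ[𝕜] Matrix ι ι 𝕜 :=
  ∑ a, LinearMap.mulLeft 𝕜 (B a) * LinearMap.mulRight 𝕜 (B a)

variable {B : α → Matrix ι ι 𝕜}

@[simp] lemma krausMap_apply (x : Matrix ι ι 𝕜) : krausMap B x = ∑ a, B a * x * B a := by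
  simp [krausMap, Matrix.mul_assoc]

lemma krausMap_one (hB : ∑ a, B a * B a = 1) : krausMap B 1 = 1 := by
  simpa using hB

open scoped MatrixOrder in
lemma krausMap_nonneg (hB : ∀ a, (B a).PosSemidef) : 0 ≤ krausMap B := by
  rw [LinearMap.nonneg_iff_isPositive]
  refine LinearMap.isPositive_sum _ fun a _ ↦ ?_
  -- `x ↦ B x B` is the square of the symmetric map `x ↦ C x C` with `C = √B`.
  set C := CFC.sqrt (B a)
  have hC : C.IsHermitian := (nonneg_iff_posSemidef.mp (CFC.sqrt_nonneg (B a))).isHermitian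
  have hCC : C * C = B a := CFC.sqrt_mul_sqrt_self (B a) (hB a).nonneg
  have hS := hC.isSymmetric_mulLeft.mul_of_commute hC.isSymmetric_mulRight
    (LinearMap.commute_mulLeft_right C C)
  convert hS.isPositive_mul_self using 1
  ext x : 1
  simp [← hCC, Matrix.mul_assoc]

lemma krausMap_le_one (hB : ∀ a, (B a).IsHermitian) (hsum : ∑ a, B a * B a = 1) :
    krausMap B ≤ 1 := by
  set ad : α → Matrix ι ι 𝕜 →ₗ[𝕜] Matrix ι ι 𝕜 :=
    fun a ↦ LinearMap.mulLeft 𝕜 (B a) - LinearMap.mulRight 𝕜 (B a)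
  have had (a : α) : (ad a).IsSymmetric :=
    (hB a).isSymmetric_mulLeft.sub (hB a).isSymmetric_mulRight
  have heq : 1 - krausMap B = (2⁻¹ : 𝕜) • ∑ a, ad a * ad a := by
    ext x : 1
    have hl : ∑ a, B a * (B a * x) = x := by
      simp_rw [← Matrix.mul_assoc, ← Finset.sum_mul, hsum, Matrix.one_mul]
    have hr : ∑ a, x * (B a * B a) = x := by rw [← Finset.mul_sum, hsum, Matrix.mul_one]
    simp only [ad, krausMap_apply, LinearMap.sub_apply, LinearMap.smul_apply, LinearMap.coe_sum,
      Finset.sum_apply, Module.End.one_apply, Module.End.mul_apply, LinearMap.mulLeft_apply,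
      LinearMap.mulRight_apply, mul_sub, sub_mul, Finset.sum_sub_distrib, Matrix.mul_assoc]
    rw [hl, hr]
    module
  rw [LinearMap.le_def, heq]
  exact (LinearMap.isPositive_sum _ fun a _ ↦ (had a).isPositive_mul_self).smul_of_nonneg
    (inv_nonneg.mpr zero_le_two)

end Matrix

namespace IsBareChannel

variable {n : ℕ} {Φ : Matrix (Fin n) (Fin n) ℂ → Matrix (Fin n) (Fin n) ℂ}

open scoped MatrixOrder in
lemma exists_eq_krausMap (hΦ : IsBareChannel Φ) :
    ∃ (k : ℕ) (B : Fin k → Matrix (Fin n) (Fin n) ℂ),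
      (∀ a, (B a).PosSemidef) ∧ ∑ a, B a * B a = 1 ∧ Φ = krausMap B := by
  obtain ⟨k, E, hE, hsum, hΦ⟩ := hΦ
  refine ⟨k, fun a ↦ (hE a).sqrt, fun a ↦ ?_, ?_, funext fun ρ ↦ by simp [hΦ]⟩
  · simp only [PosSemidef.sqrt_eq_cfcSqrt]
    exact nonneg_iff_posSemidef.mp (CFC.sqrt_nonneg _)
  · simp_rw [PosSemidef.sqrt_eq_cfcSqrt, CFC.sqrt_mul_sqrt_self _ (hE _).nonneg]
    exact hsum

lemma map_one (hΦ : IsBareChannel Φ) : Φ 1 = 1 := by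
  obtain ⟨k, B, -, hsum, rfl⟩ := hΦ.exists_eq_krausMap
  exact krausMap_one hsum

lemma isFixingContraction (hΦ : IsBareChannel Φ) : IsFixingContraction Φ := by
  obtain ⟨k, B, hB, hsum, rfl⟩ := hΦ.exists_eq_krausMap
  exact LinearMap.isFixingContraction (krausMap_nonneg hB)
    (krausMap_le_one (fun a ↦ (hB a).isHermitian) hsum)

end IsBareChannel

theorem stmt_8 (n N : ℕ) (hn : 0 < n)
    (Φs : Fin N → (Matrix (Fin n) (Fin n) ℂ → Matrix (Fin n) (Fin n) ℂ))
    (hbare : ∀ i, IsBareChannel (Φs i))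
    (Φ : Matrix (Fin n) (Fin n) ℂ → Matrix (Fin n) (Fin n) ℂ)
    (hΦ : Φ = (List.ofFn Φs).foldl (fun f g => g ∘ f) id) :
    ¬ ∃ U : Matrix (Fin n) (Fin n) ℂ →ₗ[ℂ] Matrix (Fin n) (Fin n) ℂ,
        Function.Bijective U ∧ ∀ ρ, U (Φ ρ) = -(Φ (U ρ)) := by
  rintro ⟨U, hU, hUΦ⟩
  obtain ⟨hΦfix, hΦ1⟩ : IsFixingContraction Φ ∧ Φ 1 = 1 := by
    rw [hΦ]
    refine List.foldlRecOn (motive := fun f ↦ IsFixingContraction f ∧ f 1 = 1) _ _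
      ⟨.id, rfl⟩ fun f hf g hg ↦ ?_
    obtain ⟨i, rfl⟩ := List.mem_ofFn.mp hg
    exact ⟨(hbare i).isFixingContraction.comp hf.1, by simp [hf.2, (hbare i).map_one]⟩
  have : IsAddTorsionFree (Matrix (Fin n) (Fin n) ℂ) := .of_module_rat _
  have hU1 : U 1 = 0 :=
    hΦfix.eq_zero_of_map_eq_neg <| by rw [← neg_eq_iff_eq_neg.mpr (hUΦ 1), hΦ1]
  have : NeZero n := ⟨hn.ne'⟩
  exact one_ne_zero (hU.injective (hU1.trans (map_zero U).symm))
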